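/- arXiv:1903.02670 — 2 statements merged into one kernel-verified Lean document; each statement's English description precedes it below -/
import Mathlib

section
/- Let μ > 0, 0 < T ≤ 1, 1/2 < s < 1, and φ ∈ H^s(ℝ). Then for all t ∈ (0, T], t^{(1-s)/2} ‖∂_x E_μ(t)φ‖_{L²} ≤ C ‖φ‖_{H^s}, where C depends only on s, μ, T, and the constant M from the symbol bound, and E_μ(t) is the semigroup with symbol e^{tΦ(ξ)}, Φ(ξ) = -ξ² + μ(1+ξ²)^{-1/2}. -/
/-!
On the Fourier side the claim is the multiplier bound
`t^((1-s)/2) |ξ| e^{tΦ(ξ)} ≤ e^μ ⟨ξ⟩^s` with `⟨ξ⟩ = (1 + ξ²)^(1/2)`.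
Since `(1 + ξ²)^(-1/2) ≤ 1`, `e^{tΦ(ξ)} ≤ e^μ e^{-tξ²}`, and with `a = (1-s)/2` we have
`t^a |ξ| ≤ ⟨ξ⟩^s (t(1 + ξ²))^a ≤ ⟨ξ⟩^s (1 + tξ²)^a ≤ ⟨ξ⟩^s e^{tξ²}` for `t ≤ 1`, `0 ≤ a ≤ 1`.
-/

open MeasureTheory

/-- The symbol of the linear part of the Kuramoto–Sivashinsky equation. -/
noncomputable def ksSymbol (μ ξ : ℝ) : ℝ :=
  -ξ ^ 2 + μ * (1 + ξ ^ 2) ^ (-(1 : ℝ) / 2)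

lemma MeasureTheory.ofReal_mul_eLpNorm_le_of_mul_norm_le {α E F : Type*} [MeasurableSpace α]
    {μ : Measure α} {p : ENNReal} [NormedAddCommGroup E] [NormedSpace ℝ E]
    [NormedAddCommGroup F] {f : α → E} {g : α → F} {c C : ℝ} (hc : 0 ≤ c)
    (h : ∀ x, c * ‖f x‖ ≤ C * ‖g x‖) :
    ENNReal.ofReal c * eLpNorm f p μ ≤ ENNReal.ofReal C * eLpNorm g p μ := by
  rw [← Real.enorm_of_nonneg hc, ← eLpNorm_const_smul]
  refine eLpNorm_le_mul_eLpNorm_of_ae_le_mul (Filter.Eventually.of_forall fun x => ?_) p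
  simpa only [Pi.smul_apply, norm_smul, Real.norm_of_nonneg hc] using h x

lemma ksSymbol_mul_le {μ t : ℝ} (hμ : 0 ≤ μ) (ht1 : t ≤ 1) (ξ : ℝ) :
    t * ksSymbol μ ξ ≤ μ - t * ξ ^ 2 := by
  have hpow0 : 0 ≤ (1 + ξ ^ 2) ^ (-(1 : ℝ) / 2) := by positivity
  have hpow1 : (1 + ξ ^ 2) ^ (-(1 : ℝ) / 2) ≤ 1 :=
    Real.rpow_le_one_of_one_le_of_nonpos (by nlinarith) (by norm_num)
  unfold ksSymbol
  nlinarith [mul_le_mul ht1 hpow1 hpow0 zero_le_one]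

lemma Real.one_add_rpow_le_exp {x a : ℝ} (hx : 0 ≤ x) (ha : a ≤ 1) :
    (1 + x) ^ a ≤ Real.exp x := by
  calc (1 + x) ^ a ≤ (1 + x) ^ (1 : ℝ) := Real.rpow_le_rpow_of_exponent_le (by linarith) ha
    _ ≤ Real.exp x := by rw [Real.rpow_one]; linarith [Real.add_one_le_exp x]

lemma rpow_mul_one_add_sq_le_exp {t a : ℝ} (ht0 : 0 ≤ t) (ht1 : t ≤ 1) (ha0 : 0 ≤ a)
    (ha1 : a ≤ 1) (ξ : ℝ) :
    t ^ a * (1 + ξ ^ 2) ^ a ≤ Real.exp (t * ξ ^ 2) := by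
  rw [← Real.mul_rpow ht0 (by positivity)]
  calc (t * (1 + ξ ^ 2)) ^ a ≤ (1 + t * ξ ^ 2) ^ a :=
        Real.rpow_le_rpow (by positivity) (by nlinarith) ha0
    _ ≤ Real.exp (t * ξ ^ 2) := Real.one_add_rpow_le_exp (by positivity) ha1

lemma abs_le_one_add_sq_rpow_half (ξ : ℝ) : |ξ| ≤ (1 + ξ ^ 2) ^ (1 / 2 : ℝ) := by
  rw [← Real.sqrt_eq_rpow]
  exact Real.abs_le_sqrt (by linarith)

lemma rpow_mul_abs_mul_exp_ksSymbol_le {μ s t : ℝ} (hμ : 0 ≤ μ) (hs0 : -1 ≤ s) (hs1 : s ≤ 1)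
    (ht0 : 0 ≤ t) (ht1 : t ≤ 1) (ξ : ℝ) :
    t ^ ((1 - s) / 2) * (|ξ| * Real.exp (t * ksSymbol μ ξ)) ≤
      Real.exp μ * (1 + ξ ^ 2) ^ (s / 2) := by
  set a := (1 - s) / 2 with ha
  have ha0 : 0 ≤ a := by linarith
  have ha1 : a ≤ 1 := by linarith
  have hbase : 0 < 1 + ξ ^ 2 := by positivity
  have hsplit : (1 + ξ ^ 2) ^ (1 / 2 : ℝ) = (1 + ξ ^ 2) ^ (s / 2) * (1 + ξ ^ 2) ^ a := by
    rw [← Real.rpow_add hbase, ha]; ring_nf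
  have hexp : Real.exp (t * ksSymbol μ ξ) ≤ Real.exp μ * Real.exp (-(t * ξ ^ 2)) := by
    rw [← Real.exp_add]
    exact Real.exp_le_exp.mpr (by linarith [ksSymbol_mul_le hμ ht1 ξ])
  have hgain : t ^ a * (1 + ξ ^ 2) ^ a * Real.exp (-(t * ξ ^ 2)) ≤ 1 := by
    rw [Real.exp_neg, ← div_eq_mul_inv, div_le_one (Real.exp_pos _)]
    exact rpow_mul_one_add_sq_le_exp ht0 ht1 ha0 ha1 ξ
  calc t ^ a * (|ξ| * Real.exp (t * ksSymbol μ ξ))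
      ≤ t ^ a * (((1 + ξ ^ 2) ^ (s / 2) * (1 + ξ ^ 2) ^ a) *
          (Real.exp μ * Real.exp (-(t * ξ ^ 2)))) := by
        gcongr
        exact hsplit ▸ abs_le_one_add_sq_rpow_half ξ
    _ = Real.exp μ * (1 + ξ ^ 2) ^ (s / 2) *
          (t ^ a * (1 + ξ ^ 2) ^ a * Real.exp (-(t * ξ ^ 2))) := by ring
    _ ≤ Real.exp μ * (1 + ξ ^ 2) ^ (s / 2) := by
        exact mul_le_of_le_one_right (by positivity) hgain

theorem stmt7_general (μ T s : ℝ) (hμ : 0 < μ) (hT1 : T ≤ 1)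
    (hs1 : 1 / 2 < s) (hs2 : s < 1) :
    ∃ C > (0 : ℝ), ∀ t : ℝ, 0 < t → t ≤ T → ∀ f : ℝ → ℂ,
      MemLp (fun ξ : ℝ => (((1 + ξ ^ 2) ^ (s / 2) : ℝ) : ℂ) * f ξ) 2 volume →
      ENNReal.ofReal (t ^ ((1 - s) / 2)) *
          eLpNorm (fun ξ : ℝ =>
            ((|ξ| * Real.exp (t * ksSymbol μ ξ) : ℝ) : ℂ) * f ξ) 2 volume ≤
        ENNReal.ofReal C *
          eLpNorm (fun ξ : ℝ => (((1 + ξ ^ 2) ^ (s / 2) : ℝ) : ℂ) * f ξ) 2 volume := by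
  refine ⟨Real.exp μ, Real.exp_pos μ, fun t ht0 htT f _ => ?_⟩
  refine ofReal_mul_eLpNorm_le_of_mul_norm_le (by positivity) fun ξ => ?_
  have hmultiplier := rpow_mul_abs_mul_exp_ksSymbol_le hμ.le (by linarith) hs2.le ht0.le
    (htT.trans hT1) ξ
  simp only [norm_mul, Complex.norm_real, Real.norm_eq_abs, abs_abs, Real.abs_exp,
    abs_of_nonneg (by positivity : 0 ≤ (1 + ξ ^ 2) ^ (s / 2))]
  simpa only [mul_assoc] using mul_le_mul_of_nonneg_right hmultiplier (norm_nonneg (f ξ))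

/-- Smoothing estimate for the semigroup, stated on the Fourier side
(`f = φ̂`; by Plancherel `‖∂ₓE_μ(t)φ‖_{L²}` is the `L²` norm of
`ξ e^{tΦ(ξ)} f(ξ)` and `‖φ‖_{H^s}` that of `⟨ξ⟩^s f`): for `μ > 0`,
`0 < T ≤ 1`, `1/2 < s < 1`, there is `C = C(s,μ,T,M)` with
`t^((1-s)/2) ‖∂ₓ E_μ(t)φ‖_{L²} ≤ C ‖φ‖_{H^s}` for all `t ∈ (0,T]`. -/
theorem stmt7 (μ T s : ℝ) (hμ : 0 < μ) (hT0 : 0 < T) (hT1 : T ≤ 1)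
    (hs1 : 1 / 2 < s) (hs2 : s < 1) :
    ∃ C > (0 : ℝ), ∀ t : ℝ, 0 < t → t ≤ T → ∀ f : ℝ → ℂ,
      MemLp (fun ξ : ℝ => (((1 + ξ ^ 2) ^ (s / 2) : ℝ) : ℂ) * f ξ) 2 volume →
      ENNReal.ofReal (t ^ ((1 - s) / 2)) *
          eLpNorm (fun ξ : ℝ =>
            ((|ξ| * Real.exp (t * ksSymbol μ ξ) : ℝ) : ℂ) * f ξ) 2 volume ≤
        ENNReal.ofReal C *
          eLpNorm (fun ξ : ℝ => (((1 + ξ ^ 2) ^ (s / 2) : ℝ) : ℂ) * f ξ) 2 volume :=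
  stmt7_general μ T s hμ hT1 hs1 hs2
end

section
/- Let Φ(ξ) = -ξ² + μ(1+ξ²)^{-1/2} with μ > 0. For ξ ∈ [1, 3], z ∈ [N+1, N+2], η ∈ [-N, -N+1] with ξ = z + η and N ≥ 2, the quantity -Φ(ξ) + Φ(z) + Φ(η) satisfies |-Φ(ξ) + Φ(z) + Φ(η)| ≥ c N² for a constant c > 0 independent of N (for N sufficiently large). -/
lemma ks_aux (x : ℝ) : (0:ℝ) < (1 + x ^ 2) ^ (-(1 : ℝ) / 2) ∧ (1 + x ^ 2) ^ (-(1 : ℝ) / 2) ≤ 1 := by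
  constructor
  · exact Real.rpow_pos_of_pos (by positivity) _
  · exact Real.rpow_le_one_of_one_le_of_nonpos (by nlinarith [sq_nonneg x]) (by norm_num)

/-- Resonance lower bound in the ill-posedness argument: for `μ > 0` there are
`c > 0` and `N₀ ≥ 2` such that for all `N ≥ N₀` and all `ξ ∈ [1,3]`,
`z ∈ [N+1,N+2]`, `η ∈ [-N,-N+1]` with `ξ = z + η`, one has
`|-Φ(ξ) + Φ(z) + Φ(η)| ≥ c N²`. -/
theorem stmt18 (μ : ℝ) (hμ : 0 < μ) :
    ∃ c > (0 : ℝ), ∃ N₀ : ℝ, 2 ≤ N₀ ∧ ∀ N : ℝ, N₀ ≤ N →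
      ∀ ξ z η : ℝ, ξ ∈ Set.Icc (1 : ℝ) 3 → z ∈ Set.Icc (N + 1) (N + 2) →
        η ∈ Set.Icc (-N) (-N + 1) → ξ = z + η →
        c * N ^ 2 ≤ |(-ksSymbol μ ξ + ksSymbol μ z + ksSymbol μ η)| := by
  refine ⟨1, one_pos, 3 + 2 * μ, by linarith, ?_⟩
  intro N hN ξ z η hξ hz hη hsum
  obtain ⟨hξ1, hξ3⟩ := hξ
  obtain ⟨hz1, hz2⟩ := hz
  obtain ⟨hη1, hη2⟩ := hη
  obtain ⟨hAξ, _⟩ := ks_aux ξ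
  obtain ⟨hAzpos, hAz⟩ := ks_aux z
  obtain ⟨hAηpos, hAη⟩ := ks_aux η
  have hN3 : (3:ℝ) ≤ N := by linarith
  have hη2' : η ^ 2 ≥ (N - 1) ^ 2 := by nlinarith
  have hval : -ksSymbol μ ξ + ksSymbol μ z + ksSymbol μ η ≤ -(N ^ 2) := by
    simp only [ksSymbol]
    nlinarith [sq_nonneg (N - 3 - 2*μ), sq_nonneg ξ]
  calc 1 * N ^ 2 = N ^ 2 := one_mul _
    _ ≤ -(-ksSymbol μ ξ + ksSymbol μ z + ksSymbol μ η) := by linarith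
    _ ≤ |(-ksSymbol μ ξ + ksSymbol μ z + ksSymbol μ η)| := neg_le_abs _
end
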